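/- Assume X_A and X_B are conditionally independent given Y, the prior is well-defined, and f is a differentiable convex function with f(1)=0 whose derivative f' is injective. If reporting strategies ŝ_A : Σ_A → Δ_Σ and ŝ_B : Σ_B → Δ_Σ satisfy Pay(ŝ_A, ŝ_B) = MI^f(X_A;X_B), then there exists a permutation π of Σ such that Pr[Y=π(y)] = Pr[Y=y], ŝ_A(x_A)(π(y)) = Pr[Y=y|X_A=x_A] and ŝ_B(x_B)(π(y)) = Pr[Y=y|X_B=x_B] for all x_A, x_B, y. -/

import Mathlib

noncomputable section

variable {SA SB S : Type*}

/-- Joint probability `Pr[X_A = a, X_B = b]` induced by the joint pmf `ν` of `(X_A, X_B, Y)`. -/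
def jAB [Fintype S] (ν : SA → SB → S → ℝ) (a : SA) (b : SB) : ℝ := ∑ y, ν a b y

/-- Joint probability `Pr[X_A = a, Y = y]`. -/
def jAY [Fintype SB] (ν : SA → SB → S → ℝ) (a : SA) (y : S) : ℝ := ∑ b, ν a b y

/-- Joint probability `Pr[X_B = b, Y = y]`. -/
def jBY [Fintype SA] (ν : SA → SB → S → ℝ) (b : SB) (y : S) : ℝ := ∑ a, ν a b y

/-- Marginal probability `Pr[X_A = a]`. -/
def prA [Fintype SB] [Fintype S] (ν : SA → SB → S → ℝ) (a : SA) : ℝ := ∑ b, ∑ y, ν a b y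

/-- Marginal probability `Pr[X_B = b]`. -/
def prB [Fintype SA] [Fintype S] (ν : SA → SB → S → ℝ) (b : SB) : ℝ := ∑ a, ∑ y, ν a b y

/-- Marginal probability `Pr[Y = y]`. -/
def prY [Fintype SA] [Fintype SB] (ν : SA → SB → S → ℝ) (y : S) : ℝ := ∑ a, ∑ b, ν a b y

/-- Pointwise mutual information `K(a,b) = Pr[a,b]/(Pr[a]·Pr[b])`. -/
def K [Fintype SA] [Fintype SB] [Fintype S] (ν : SA → SB → S → ℝ) (a : SA) (b : SB) : ℝ :=
  jAB ν a b / (prA ν a * prB ν b)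

/-- Conditional probability `Pr[Y = y | X_A = a]`. -/
def condA [Fintype SB] [Fintype S] (ν : SA → SB → S → ℝ) (a : SA) (y : S) : ℝ :=
  jAY ν a y / prA ν a

/-- Conditional probability `Pr[Y = y | X_B = b]`. -/
def condB [Fintype SA] [Fintype S] (ν : SA → SB → S → ℝ) (b : SB) (y : S) : ℝ :=
  jBY ν b y / prB ν b

/-- `X_A` and `X_B` are conditionally independent given `Y`:
`Pr[a, b | y] = Pr[a | y] · Pr[b | y]` for all `a, b, y`. -/
def CondIndep [Fintype SA] [Fintype SB] (ν : SA → SB → S → ℝ) : Prop :=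
  ∀ a b y, ν a b y / prY ν y = (jAY ν a y / prY ν y) * (jBY ν b y / prY ν y)

/-- `ν` is a probability mass function. -/
def IsPMF [Fintype SA] [Fintype SB] [Fintype S] (ν : SA → SB → S → ℝ) : Prop :=
  (∀ a b y, 0 ≤ ν a b y) ∧ ∑ a, ∑ b, ∑ y, ν a b y = 1

/-- `p` is a probability vector: nonnegative entries summing to `1`. -/
def IsProbVec {T : Type*} [Fintype T] (p : T → ℝ) : Prop := (∀ t, 0 ≤ p t) ∧ ∑ t, p t = 1

/-- The convex conjugate `f*(x) = sup_t (t·x − f(t))`, as a real-valued supremum. -/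
def fconj (f : ℝ → ℝ) (x : ℝ) : ℝ := sSup (Set.range fun t => t * x - f t)

/-- `c` is a subgradient of `f` at `t`: `f(s) ≥ f(t) + c·(s − t)` for all `s`. -/
def IsSubgradientAt (f : ℝ → ℝ) (t c : ℝ) : Prop := ∀ s : ℝ, f t + c * (s - t) ≤ f s

/-- The f-mutual information `MI^f(X_A;X_B) = Σ_{a,b} Pr[a]·Pr[b]·f(K(a,b))`. -/
def MIf [Fintype SA] [Fintype SB] [Fintype S] (f : ℝ → ℝ) (ν : SA → SB → S → ℝ) : ℝ :=
  ∑ a, ∑ b, prA ν a * prB ν b * f (K ν a b)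

/-- The agreement `g(a,b) = Σ_y h_A(a)(y)·h_B(b)(y)/p(y)`. -/
def gagr [Fintype S] (hA : SA → S → ℝ) (hB : SB → S → ℝ) (p : S → ℝ) (a : SA) (b : SB) : ℝ :=
  ∑ y, hA a y * hB b y / p y

/-- Expected `f`-mutual information gain
`MIG^f(h_A,h_B,p) = Σ Pr[a,b]·f'(g(a,b)) − Σ Pr[a]·Pr[b]·f*(f'(g(a,b)))`. -/
def MIG [Fintype SA] [Fintype SB] [Fintype S] (f : ℝ → ℝ) (ν : SA → SB → S → ℝ)
    (hA : SA → S → ℝ) (hB : SB → S → ℝ) (p : S → ℝ) : ℝ :=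
  ∑ a, ∑ b, jAB ν a b * deriv f (gagr hA hB p a b)
    - ∑ a, ∑ b, prA ν a * prB ν b * fconj f (deriv f (gagr hA hB p a b))

/-- Each agent's expected payment in the multi-task common ground mechanism `MCG(f)`. -/
def Pay [Fintype SA] [Fintype SB] [Fintype S] (f : ℝ → ℝ) (ν : SA → SB → S → ℝ)
    (sA : SA → S → ℝ) (sB : SB → S → ℝ) : ℝ :=
  MIG f ν sA sB (prY ν)

/-- `({a^{x_A}}, {b^{x_B}}, r)` is a solution of the agreement system:
probability vectors, `r` strictly positive, with
`Σ_y a^{x_A}(y)·b^{x_B}(y)/r(y) = K(x_A,x_B)` for all `x_A, x_B`. -/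
def AgreementSolution [Fintype SA] [Fintype SB] [Fintype S] (ν : SA → SB → S → ℝ)
    (a : SA → S → ℝ) (b : SB → S → ℝ) (r : S → ℝ) : Prop :=
  (∀ xa, IsProbVec (a xa)) ∧ (∀ xb, IsProbVec (b xb)) ∧ IsProbVec r ∧ (∀ y, 0 < r y) ∧
    ∀ xa xb, (∑ y, a xa y * b xb y / r y) = K ν xa xb

/-- The prior is well-defined: any two solutions of the agreement system coincide
up to a permutation of `Σ`. -/
def WellDefinedPrior [Fintype SA] [Fintype SB] [Fintype S] (ν : SA → SB → S → ℝ) : Prop :=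
  ∀ (a : SA → S → ℝ) (b : SB → S → ℝ) (r : S → ℝ)
    (c : SA → S → ℝ) (d : SB → S → ℝ) (r' : S → ℝ),
    AgreementSolution ν a b r → AgreementSolution ν c d r' →
    ∃ π : Equiv.Perm S, ∀ y, r (π y) = r' y ∧ (∀ xa, a xa (π y) = c xa y)
      ∧ (∀ xb, b xb (π y) = d xb y)

/-- The prior is stable: fixing the truthful `A`-side (resp. `B`-side) of the agreement
system, the only solution for the other side is the truthful one. -/
def StablePrior [Fintype SA] [Fintype SB] [Fintype S] (ν : SA → SB → S → ℝ) : Prop :=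
  (∀ b : SB → S → ℝ, (∀ xb, IsProbVec (b xb)) →
    (∀ xa xb, (∑ y, condA ν xa y * b xb y / prY ν y) = K ν xa xb) →
    ∀ xb y, b xb y = condB ν xb y) ∧
  (∀ a : SA → S → ℝ, (∀ xa, IsProbVec (a xa)) →
    (∀ xa xb, (∑ y, a xa y * condB ν xb y / prY ν y) = K ν xa xb) →
    ∀ xa y, a xa y = condA ν xa y)

/-! Under conditional independence, the truthful reports `Pr[Y = · | X_A = x_A]`,
`Pr[Y = · | X_B = x_B]` with prior `Pr[Y = ·]` solve the agreement system. Using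
`f*(f'(t)) = t f'(t) − f(t)`, the gap `MI^f − Pay` is the `Pr[X_A]·Pr[X_B]`-weighted sum of the
Bregman divergences `D_f(K, g)`. Convexity together with injectivity of `f'` makes `f` strictly
convex, so each divergence vanishes only when `g = K`; a maximal profile therefore solves the
agreement system as well, and well-definedness of the prior yields the permutation. -/

open Finset

def bregmanDiv (f : ℝ → ℝ) (s t : ℝ) : ℝ := f s - f t - deriv f t * (s - t)

theorem strictConvexOn_univ_of_injective_deriv {f : ℝ → ℝ} (hconv : ConvexOn ℝ Set.univ f)
    (hdiff : Differentiable ℝ f) (hinj : Function.Injective (deriv f)) :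
    StrictConvexOn ℝ Set.univ f :=
  StrictMono.strictConvexOn_univ_of_deriv hdiff.continuous <|
    (monotoneOn_univ.mp (hconv.monotoneOn_deriv fun x _ => hdiff x)).strictMono_of_injective hinj

theorem StrictConvexOn.bregmanDiv_pos {f : ℝ → ℝ} (hf : StrictConvexOn ℝ Set.univ f)
    {s t : ℝ} (hft : DifferentiableAt ℝ f t) (hst : s ≠ t) : 0 < bregmanDiv f s t := by
  unfold bregmanDiv
  rcases hst.lt_or_gt with hlt | hgt
  · have h := hf.slope_lt_deriv (Set.mem_univ s) (Set.mem_univ t) hlt hft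
    rw [slope_def_field, div_lt_iff₀ (sub_pos.mpr hlt)] at h
    linarith
  · have h := hf.deriv_lt_slope (Set.mem_univ t) (Set.mem_univ s) hgt hft
    rw [slope_def_field, lt_div_iff₀ (sub_pos.mpr hgt)] at h
    linarith

theorem StrictConvexOn.bregmanDiv_nonneg {f : ℝ → ℝ} (hf : StrictConvexOn ℝ Set.univ f)
    {s t : ℝ} (hft : DifferentiableAt ℝ f t) : 0 ≤ bregmanDiv f s t := by
  rcases eq_or_ne s t with rfl | hst
  · simp [bregmanDiv]
  · exact (hf.bregmanDiv_pos hft hst).le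

section Prior

variable [Fintype SA] [Fintype SB] {ν : SA → SB → S → ℝ}

theorem CondIndep.mul_prY (hci : CondIndep ν) {y : S} (hy : prY ν y ≠ 0) (a : SA) (b : SB) :
    ν a b y * prY ν y = jAY ν a y * jBY ν b y := by
  have h := hci a b y
  field_simp at h
  linear_combination h

variable [Fintype S]

theorem jAB_eq_mul_K {a : SA} {b : SB} (hab : prA ν a * prB ν b ≠ 0) :
    jAB ν a b = prA ν a * prB ν b * K ν a b := by
  rw [K, mul_div_cancel₀ _ hab]

theorem MIf_sub_MIG (f : ℝ → ℝ) (hconj : ∀ t, fconj f (deriv f t) = t * deriv f t - f t)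
    (hA : ∀ a, prA ν a ≠ 0) (hB : ∀ b, prB ν b ≠ 0)
    (qA : SA → S → ℝ) (qB : SB → S → ℝ) (p : S → ℝ) :
    MIf f ν - MIG f ν qA qB p =
      ∑ a, ∑ b, prA ν a * prB ν b * bregmanDiv f (K ν a b) (gagr qA qB p a b) := by
  simp only [MIf, MIG, jAB_eq_mul_K (mul_ne_zero (hA _) (hB _)), hconj, bregmanDiv,
    ← sum_sub_distrib]
  refine sum_congr rfl fun a _ => sum_congr rfl fun b _ => ?_
  ring

theorem gagr_eq_K_of_Pay_eq_MIf {f : ℝ → ℝ} (hf : StrictConvexOn ℝ Set.univ f)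
    (hdiff : Differentiable ℝ f) (hconj : ∀ t, fconj f (deriv f t) = t * deriv f t - f t)
    (hA : ∀ a, 0 < prA ν a) (hB : ∀ b, 0 < prB ν b) {sA : SA → S → ℝ} {sB : SB → S → ℝ}
    (hmax : Pay f ν sA sB = MIf f ν) (a : SA) (b : SB) :
    gagr sA sB (prY ν) a b = K ν a b := by
  have hterm_nonneg : ∀ a b, 0 ≤ prA ν a * prB ν b *
      bregmanDiv f (K ν a b) (gagr sA sB (prY ν) a b) := fun a b =>
    mul_nonneg (mul_pos (hA a) (hB b)).le (hf.bregmanDiv_nonneg (hdiff _))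
  have hsum : ∑ a, ∑ b, prA ν a * prB ν b *
      bregmanDiv f (K ν a b) (gagr sA sB (prY ν) a b) = 0 := by
    rw [← MIf_sub_MIG f hconj (fun a => (hA a).ne') (fun b => (hB b).ne'), ← Pay, hmax,
      sub_self]
  have hterm := (sum_eq_zero_iff_of_nonneg fun b _ => hterm_nonneg a b).mp
    ((sum_eq_zero_iff_of_nonneg fun a _ => sum_nonneg fun b _ => hterm_nonneg a b).mp
      hsum a (mem_univ a)) b (mem_univ b)
  by_contra hne
  exact (mul_pos (mul_pos (hA a) (hB b)) (hf.bregmanDiv_pos (hdiff _) (Ne.symm hne))).ne' hterm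

theorem isProbVec_prY (hν : IsPMF ν) : IsProbVec (prY ν) := by
  refine ⟨fun y => sum_nonneg fun a _ => sum_nonneg fun b _ => hν.1 a b y, ?_⟩
  calc ∑ y, prY ν y = ∑ a, ∑ y, ∑ b, ν a b y := sum_comm
    _ = 1 := by simp_rw [sum_comm (γ := S)]; exact hν.2

theorem isProbVec_condA (hν : IsPMF ν) (hA : ∀ a, 0 < prA ν a) (a : SA) :
    IsProbVec (condA ν a) := by
  refine ⟨fun y => div_nonneg (sum_nonneg fun b _ => hν.1 a b y) (hA a).le, ?_⟩
  simp only [condA]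
  rw [← sum_div, div_eq_one_iff_eq (hA a).ne']
  exact sum_comm

theorem isProbVec_condB (hν : IsPMF ν) (hB : ∀ b, 0 < prB ν b) (b : SB) :
    IsProbVec (condB ν b) := by
  refine ⟨fun y => div_nonneg (sum_nonneg fun a _ => hν.1 a b y) (hB b).le, ?_⟩
  simp only [condB]
  rw [← sum_div, div_eq_one_iff_eq (hB b).ne']
  exact sum_comm

theorem CondIndep.sum_condA_mul_condB_div_prY (hci : CondIndep ν) (hY : ∀ y, prY ν y ≠ 0)
    (a : SA) (b : SB) :
    ∑ y, condA ν a y * condB ν b y / prY ν y = K ν a b := by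
  rw [K, jAB, sum_div]
  refine sum_congr rfl fun y _ => ?_
  rw [condA, condB, div_mul_div_comm, div_div, ← hci.mul_prY (hY y),
    mul_div_mul_right _ _ (hY y)]

theorem agreementSolution_condA_condB_prY (hν : IsPMF ν) (hci : CondIndep ν)
    (hA : ∀ a, 0 < prA ν a) (hB : ∀ b, 0 < prB ν b) (hY : ∀ y, 0 < prY ν y) :
    AgreementSolution ν (condA ν) (condB ν) (prY ν) :=
  ⟨isProbVec_condA hν hA, isProbVec_condB hν hB, isProbVec_prY hν, hY,
    hci.sum_condA_mul_condB_div_prY fun y => (hY y).ne'⟩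

end Prior

theorem stmt_9_general [Fintype SA] [Fintype SB] [Fintype S]
    (ν : SA → SB → S → ℝ) (hν : IsPMF ν)
    (hA : ∀ a, 0 < prA ν a) (hB : ∀ b, 0 < prB ν b) (hY : ∀ y, 0 < prY ν y)
    (hci : CondIndep ν) (hwd : WellDefinedPrior ν)
    (f : ℝ → ℝ) (hconv : ConvexOn ℝ Set.univ f) (hdiff : Differentiable ℝ f)
    (hconj : ∀ t : ℝ, fconj f (deriv f t) = t * deriv f t - f t)
    (hinj : Function.Injective (deriv f))
    (sA : SA → S → ℝ) (sB : SB → S → ℝ)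
    (hsA : ∀ a, IsProbVec (sA a)) (hsB : ∀ b, IsProbVec (sB b))
    (hmax : Pay f ν sA sB = MIf f ν) :
    ∃ π : Equiv.Perm S, ∀ (a : SA) (b : SB) (y : S),
      prY ν (π y) = prY ν y ∧ sA a (π y) = condA ν a y ∧ sB b (π y) = condB ν b y := by
  have hstrict := strictConvexOn_univ_of_injective_deriv hconv hdiff hinj
  have hreports : AgreementSolution ν sA sB (prY ν) :=
    ⟨hsA, hsB, isProbVec_prY hν, hY, gagr_eq_K_of_Pay_eq_MIf hstrict hdiff hconj hA hB hmax⟩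
  obtain ⟨π, hπ⟩ := hwd _ _ _ _ _ _ hreports (agreementSolution_condA_condB_prY hν hci hA hB hY)
  exact ⟨π, fun a b y => ⟨(hπ y).1, (hπ y).2.1 a, (hπ y).2.2 b⟩⟩

/-- Focality of `MCG(f)`: under conditional independence, a well-defined prior, and a
differentiable convex `f` with injective derivative, any strategy profile attaining
the maximal payment `MI^f(X_A;X_B)` is a permutation strategy profile. -/
theorem stmt_9 [Fintype SA] [Fintype SB] [Fintype S] [Nonempty SA] [Nonempty SB] [Nonempty S]
    (ν : SA → SB → S → ℝ) (hν : IsPMF ν)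
    (hA : ∀ a, 0 < prA ν a) (hB : ∀ b, 0 < prB ν b) (hY : ∀ y, 0 < prY ν y)
    (hci : CondIndep ν) (hwd : WellDefinedPrior ν)
    (f : ℝ → ℝ) (hconv : ConvexOn ℝ Set.univ f) (hdiff : Differentiable ℝ f) (hf1 : f 1 = 0)
    (hconj : ∀ t : ℝ, fconj f (deriv f t) = t * deriv f t - f t)
    (hinj : Function.Injective (deriv f))
    (sA : SA → S → ℝ) (sB : SB → S → ℝ)
    (hsA : ∀ a, IsProbVec (sA a)) (hsB : ∀ b, IsProbVec (sB b))
    (hmax : Pay f ν sA sB = MIf f ν) :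
    ∃ π : Equiv.Perm S, ∀ (a : SA) (b : SB) (y : S),
      prY ν (π y) = prY ν y ∧ sA a (π y) = condA ν a y ∧ sB b (π y) = condB ν b y :=
  stmt_9_general ν hν hA hB hY hci hwd f hconv hdiff hconj hinj sA sB hsA hsB hmax
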